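/- Forests f₁, f₂ over Σ are equal modulo the commutativity identities for all c ∈ 𝓒 if and only if nf_𝓒(f₁) = nf_𝓒(f₂). -/

import Mathlib

inductive RTree (σ : Type) : Type
  | node : σ → List (RTree σ) → RTree σ

/-- The alphabet `Σ ∪ {(, )}`: `⊥` is `'('`, `(⊥ : WithBot σ)` is `')'` and
`letter a` is the letter `a ∈ Σ`.  If `σ` is linearly ordered, this alphabet
carries the induced linear order. -/
abbrev TSym (σ : Type) : Type := WithBot (WithBot σ)

def lparen {σ : Type} : TSym σ := ⊥
def rparen {σ : Type} : TSym σ := ((⊥ : WithBot σ) : TSym σ)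
def letter {σ : Type} (a : σ) : TSym σ := ((a : WithBot σ) : TSym σ)

mutual
/-- The term representation of a tree as a string over `Σ ∪ {(, )}`:
`rep(a(f)) = a ( rep(f) )`. -/
def repT {σ : Type} : RTree σ → List (TSym σ)
  | .node a l => letter a :: lparen :: (repF l ++ [rparen])
/-- The term representation of a forest: `rep(t₁ ⋯ tₙ) = rep(t₁) ⋯ rep(tₙ)`. -/
def repF {σ : Type} : List (RTree σ) → List (TSym σ)
  | [] => []
  | t :: ts => repT t ++ repF ts
end

/-- The length-lexicographic order on strings induced by an order `r`. -/
def llex {α : Type} (r : α → α → Prop) (x y : List α) : Prop :=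
  x.length < y.length ∨ (x.length = y.length ∧ List.Lex r x y)

instance {α : Type} [DecidableEq α] (r : α → α → Prop) [DecidableRel r] :
    DecidableRel (llex r) := fun _ _ => by unfold llex; infer_instance

/-- The Boolean comparison used for sorting sibling trees: `s ≤ t` iff
`rep(t)` is not length-lexicographically smaller than `rep(s)`. -/
def leTree {σ : Type} [LinearOrder σ] (s t : RTree σ) : Bool :=
  decide (¬ llex (· < ·) (repT t) (repT s))

/-- Sort a list of sibling trees by the length-lexicographic order of their
term representations. -/
def sortTrees {σ : Type} [LinearOrder σ] (l : List (RTree σ)) : List (RTree σ) :=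
  l.mergeSort leTree

mutual
/-- The commutative normal form: below a `𝓒`-labelled node, the children are
sorted with respect to `<llex` of their term representations. -/
def nfCT {σ : Type} [LinearOrder σ] (C : Set σ) [DecidablePred (· ∈ C)] :
    RTree σ → RTree σ
  | .node a l => .node a (if a ∈ C then sortTrees (nfCF C l) else nfCF C l)
/-- The commutative normal form of a forest. -/
def nfCF {σ : Type} [LinearOrder σ] (C : Set σ) [DecidablePred (· ∈ C)] :
    List (RTree σ) → List (RTree σ)
  | [] => []
  | t :: ts => nfCT C t :: nfCF C ts
end

/-- Equality of forests modulo the commutativity identities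
`c(t₁ ⋯ tₙ) = c(t_{σ(1)} ⋯ t_{σ(n)})` for `c ∈ 𝓒`: the smallest congruence
containing all instances of these identities. -/
inductive EqC {σ : Type} (C : Set σ) : List (RTree σ) → List (RTree σ) → Prop
  | comm {c : σ} {l l' : List (RTree σ)} :
      c ∈ C → l.Perm l' → EqC C [.node c l] [.node c l']
  | refl (f : List (RTree σ)) : EqC C f f
  | symm {f g : List (RTree σ)} : EqC C f g → EqC C g f
  | trans {f g h : List (RTree σ)} : EqC C f g → EqC C g h → EqC C f h
  | congrNode {a : σ} {f g : List (RTree σ)} :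
      EqC C f g → EqC C [.node a f] [.node a g]
  | congrConcat {f f' g g' : List (RTree σ)} :
      EqC C f f' → EqC C g g' → EqC C (f ++ g) (f' ++ g')

/-!
Soundness: every generating identity `c(l) = c(l')`, with `l'` a permutation of `l`, is
respected by `nf_𝓒`, because sorting two permutations of one list gives the same result as
soon as the comparison is a total order. It is one here since term representations are
uniquely decodable, so `<llex` on `rep(t)` separates distinct trees.
Completeness: the normal form is reached from `f` by permuting children of `𝓒`-nodes, so
`f` is equal to `nf_𝓒(f)` modulo commutativity.
-/

section Llex

variable {α : Type} [LinearOrder α]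

theorem llex_irrefl (x : List α) : ¬ llex (· < ·) x x := by
  rintro (h | ⟨-, h⟩)
  · exact lt_irrefl _ h
  · exact irrefl_of (List.Lex (· < · : α → α → Prop)) x h

theorem llex_trans {x y z : List α} (hxy : llex (· < ·) x y) (hyz : llex (· < ·) y z) :
    llex (· < ·) x z := by
  rcases hxy with hxy | ⟨hlen₁, hxy⟩ <;> rcases hyz with hyz | ⟨hlen₂, hyz⟩
  · exact Or.inl (hxy.trans hyz)
  · exact Or.inl (hlen₂ ▸ hxy)
  · exact Or.inl (hlen₁ ▸ hyz)
  · exact Or.inr ⟨hlen₁.trans hlen₂, List.lex_trans (fun h₁ h₂ => lt_trans h₁ h₂) hxy hyz⟩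

theorem llex_or_llex_of_ne {x y : List α} (h : x ≠ y) :
    llex (· < ·) x y ∨ llex (· < ·) y x := by
  rcases lt_trichotomy x.length y.length with hlen | hlen | hlen
  · exact Or.inl (Or.inl hlen)
  · rcases trichotomous_of (List.Lex (· < · : α → α → Prop)) x y with hxy | hxy | hxy
    · exact Or.inl (Or.inr ⟨hlen, hxy⟩)
    · exact absurd hxy h
    · exact Or.inr (Or.inr ⟨hlen.symm, hxy⟩)
  · exact Or.inr (Or.inl hlen)

end Llex

section Rep

variable {σ : Type}

theorem letter_ne_rparen (a : σ) : letter a ≠ rparen := by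
  simp [letter, rparen]

/-- The closing parenthesis after a forest marks where its representation ends. -/
theorem repF_append_rparen_inj : ∀ (f g : List (RTree σ)) (x y : List (TSym σ)),
    repF f ++ rparen :: x = repF g ++ rparen :: y → f = g ∧ x = y
  | [], [], x, y, h => by simpa [repF] using h
  | [], .node b _ :: _, _, _, h => by
    simp only [repF, repT, List.nil_append, List.cons_append, List.append_assoc,
      List.cons.injEq] at h
    exact absurd h.1.symm (letter_ne_rparen b)
  | .node a _ :: _, [], _, _, h => by
    simp only [repF, repT, List.nil_append, List.cons_append, List.append_assoc,
      List.cons.injEq] at h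
    exact absurd h.1 (letter_ne_rparen a)
  | .node a l :: ts, .node b m :: us, x, y, h => by
    simp only [repF, repT, List.cons_append, List.nil_append, List.append_assoc, List.cons.injEq] at h
    obtain ⟨hab, -, h⟩ := h
    obtain ⟨rfl, hrest⟩ := repF_append_rparen_inj l m _ _ h
    obtain ⟨rfl, rfl⟩ := repF_append_rparen_inj ts us x y hrest
    exact ⟨by rw [show a = b by simpa [letter] using hab], rfl⟩

theorem repF_injective : Function.Injective (repF : List (RTree σ) → List (TSym σ)) :=
  fun f g h => (repF_append_rparen_inj f g [] [] (by rw [h])).1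

theorem repT_injective : Function.Injective (repT : RTree σ → List (TSym σ)) := by
  intro s t h
  have : repF [s] = repF [t] := by simp [repF, h]
  simpa using repF_injective this

end Rep

section Sorting

variable {σ : Type} [LinearOrder σ]

theorem leTree_total (s t : RTree σ) : (leTree s t || leTree t s) = true := by
  simp only [leTree, Bool.or_eq_true, decide_eq_true_eq]
  by_contra h
  push Not at h
  exact llex_irrefl _ (llex_trans h.1 h.2)

theorem leTree_trans (s t u : RTree σ) (hst : leTree s t) (htu : leTree t u) :
    leTree s u = true := by
  simp only [leTree, decide_eq_true_eq] at *
  intro hus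
  by_cases he : repT s = repT t
  · exact htu (he ▸ hus)
  rcases llex_or_llex_of_ne he with h | h
  · exact htu (llex_trans hus h)
  · exact hst h

theorem leTree_antisymm (s t : RTree σ) (hst : leTree s t = true) (hts : leTree t s = true) :
    s = t := by
  simp only [leTree, decide_eq_true_eq] at hst hts
  by_contra hne
  rcases llex_or_llex_of_ne (repT_injective.ne hne) with h | h
  · exact hts h
  · exact hst h

theorem sortTrees_perm (l : List (RTree σ)) : (sortTrees l).Perm l :=
  List.mergeSort_perm l leTree

theorem sortTrees_eq_of_perm {l l' : List (RTree σ)} (h : l.Perm l') :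
    sortTrees l = sortTrees l' :=
  List.Perm.eq_of_pairwise (fun s t _ _ => leTree_antisymm s t)
    (List.pairwise_mergeSort leTree_trans leTree_total l)
    (List.pairwise_mergeSort leTree_trans leTree_total l')
    (((sortTrees_perm l).trans h).trans (sortTrees_perm l').symm)

end Sorting

section NormalForm

variable {σ : Type} [LinearOrder σ] (C : Set σ) [DecidablePred (· ∈ C)]

theorem nfCF_eq_map : ∀ f : List (RTree σ), nfCF C f = f.map (nfCT C)
  | [] => rfl
  | t :: ts => by rw [nfCF, nfCF_eq_map ts, List.map_cons]

theorem nfCF_append (f g : List (RTree σ)) : nfCF C (f ++ g) = nfCF C f ++ nfCF C g := by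
  simp [nfCF_eq_map]

theorem List.Perm.nfCF {f g : List (RTree σ)} (h : f.Perm g) : (nfCF C f).Perm (nfCF C g) := by
  rw [nfCF_eq_map, nfCF_eq_map]
  exact h.map _

theorem nfCF_eq_of_eqC {f g : List (RTree σ)} (h : EqC C f g) : nfCF C f = nfCF C g := by
  induction h with
  | comm hc hperm =>
    simp only [nfCF, nfCT, if_pos hc, sortTrees_eq_of_perm (hperm.nfCF C)]
  | refl f => rfl
  | symm _ ih => exact ih.symm
  | trans _ _ ih₁ ih₂ => exact ih₁.trans ih₂
  | congrNode _ ih => simp only [nfCF, nfCT, ih]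
  | congrConcat _ _ ih₁ ih₂ => rw [nfCF_append, nfCF_append, ih₁, ih₂]

mutual
theorem eqC_nfCT : ∀ t : RTree σ, EqC C [t] [nfCT C t]
  | .node a l => by
    rw [nfCT]
    split_ifs with ha
    · exact (EqC.congrNode (eqC_nfCF l)).trans (EqC.comm ha (sortTrees_perm (nfCF C l)).symm)
    · exact EqC.congrNode (eqC_nfCF l)

theorem eqC_nfCF : ∀ f : List (RTree σ), EqC C f (nfCF C f)
  | [] => EqC.refl []
  | t :: ts => EqC.congrConcat (f := [t]) (g := ts) (eqC_nfCT t) (eqC_nfCF ts)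
end

end NormalForm

/-- Two forests are equal modulo the commutativity identities for all `c ∈ 𝓒`
iff they have the same commutative normal form. -/
theorem eqC_iff_nfC_eq {σ : Type} [LinearOrder σ] (C : Set σ)
    [DecidablePred (· ∈ C)] (f₁ f₂ : List (RTree σ)) :
    EqC C f₁ f₂ ↔ nfCF C f₁ = nfCF C f₂ := by
  refine ⟨nfCF_eq_of_eqC C, fun h => ?_⟩
  exact (eqC_nfCF C f₁).trans (h ▸ (eqC_nfCF C f₂).symm)
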